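/- arXiv:1503.08881 — 5 statements merged into one kernel-verified Lean document; each statement's English description precedes it below -/
import Mathlib

section
/- Suppose the residence-time matrix P is irreducible and R0 > 1. Then the disease-free equilibrium I = 0 of I'(t) = G(I(t)) is unstable: there is a neighborhood U of 0 such that for every δ > 0 there exists an initial condition I(0) ∈ Ω with 0 < |I(0)| < δ whose solution leaves U in finite time. -/
open Matrix Filter

noncomputable section

/-- The spectral radius of a real square matrix: the supremum of the norms of its
complex eigenvalues. -/
def specRad {n : ℕ} (A : Matrix (Fin n) (Fin n) ℝ) : ℝ :=
  sSup {r : ℝ | ∃ μ ∈ spectrum ℂ (A.map (Complex.ofReal)), ‖μ‖ = r}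

/-- Irreducibility of a square matrix: no proper nonempty subset of indices is
invariant, i.e. from every such subset there is a nonzero entry leading outside of it. -/
def MatIrred {n : ℕ} (A : Matrix (Fin n) (Fin n) ℝ) : Prop :=
  ∀ S : Set (Fin n), S.Nonempty → S ≠ Set.univ → ∃ i ∈ S, ∃ j ∈ Sᶜ, A i j ≠ 0

/-- N̄ᵢ = bᵢ/dᵢ, the asymptotic population of patch i. -/
def Nbar {n : ℕ} (b d : Fin n → ℝ) : Fin n → ℝ := fun i => b i / d i

/-- Ñⱼ = ∑ₖ p_{kj} N̄ₖ, the effective population of patch j. -/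
def Ntil {n : ℕ} (P : Matrix (Fin n) (Fin n) ℝ) (b d : Fin n → ℝ) : Fin n → ℝ :=
  fun j => ∑ k, P k j * Nbar b d k

/-- M = P·diag(β)·diag(Ñ)⁻¹·Pᵀ. -/
def Mmat {n : ℕ} (P : Matrix (Fin n) (Fin n) ℝ) (β b d : Fin n → ℝ) :
    Matrix (Fin n) (Fin n) ℝ :=
  P * Matrix.diagonal β * Matrix.diagonal (fun j => (Ntil P b d j)⁻¹) * Pᵀ

/-- F = diag(N̄)·M. -/
def Fmat {n : ℕ} (P : Matrix (Fin n) (Fin n) ℝ) (β b d : Fin n → ℝ) :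
    Matrix (Fin n) (Fin n) ℝ :=
  Matrix.diagonal (Nbar b d) * Mmat P β b d

/-- V = −diag(dᵢ + γᵢ). -/
def Vmat {n : ℕ} (d γ : Fin n → ℝ) : Matrix (Fin n) (Fin n) ℝ :=
  -Matrix.diagonal (fun i => d i + γ i)

/-- The SIS vector field G(I) = diag(N̄ − I)·M·I + V·I, written componentwise. -/
def Gfield {n : ℕ} (P : Matrix (Fin n) (Fin n) ℝ) (β b d γ : Fin n → ℝ)
    (I : Fin n → ℝ) : Fin n → ℝ :=
  fun i => (Nbar b d i - I i) * (Mmat P β b d).mulVec I i - (d i + γ i) * I i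

/-- Ω = {I : 0 ≤ Iᵢ ≤ N̄ᵢ for all i}. -/
def OmegaSet {n : ℕ} (b d : Fin n → ℝ) : Set (Fin n → ℝ) :=
  {I | ∀ i, 0 ≤ I i ∧ I i ≤ Nbar b d i}

/-- The basic reproduction number R₀ = ρ(−F·V⁻¹). -/
def R0 {n : ℕ} (P : Matrix (Fin n) (Fin n) ℝ) (β b d γ : Fin n → ℝ) : ℝ :=
  specRad (-(Fmat P β b d * (Vmat d γ)⁻¹))

/-- `I : ℝ → ℝⁿ` is a solution of the SIS system on [0,∞). -/
def IsSol {n : ℕ} (P : Matrix (Fin n) (Fin n) ℝ) (β b d γ : Fin n → ℝ)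
    (I : ℝ → Fin n → ℝ) : Prop :=
  ∀ t ∈ Set.Ici (0 : ℝ), HasDerivWithinAt I (Gfield P β b d γ (I t)) (Set.Ici 0) t

/-!
Since `-F V⁻¹ ≥ 0` has an eigenvalue `μ` with `‖μ‖ > 1`, the moduli of a left eigenvector for `μ`
give `v ≥ 0`, `v ≠ 0` and `r > 1` with `r (d + γ) v ≤ vᵀ F`. Choose `c > 0` with
`2 c < (r - 1) (dᵢ + γᵢ)` and a ball `U` around the DFE on which `M I < c`, and suppose a solution
starting at a small multiple of `v` stays in `U`. At a most negative coordinate `i` the field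
satisfies `Gᵢ(I) ≥ K Iᵢ`, so Grönwall applied to the depth of `I` below the orthant keeps `I ≥ 0`.
Then `(v ⬝ᵥ I)' ≥ c (v ⬝ᵥ I)`, and `v ⬝ᵥ I` grows exponentially, which is impossible in `U`.
-/

open Set Topology

theorem exists_pos_forall_lt {ι : Type*} [Finite ι] {a : ι → ℝ} (ha : ∀ i, 0 < a i) :
    ∃ c > 0, ∀ i, c < a i := by
  have h : ∀ᶠ c in 𝓝[>] (0 : ℝ), 0 < c ∧ ∀ i, c < a i :=
    eventually_mem_nhdsWithin.and
      ((eventually_all.2 fun i => eventually_lt_nhds (ha i)).filter_mono nhdsWithin_le_nhds)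
  exact h.exists

theorem dotProduct_le_sum_mul_norm {ι : Type*} [Fintype ι] {v : ι → ℝ} (hv : 0 ≤ v)
    (w : ι → ℝ) : v ⬝ᵥ w ≤ (∑ i, v i) * ‖w‖ := by
  rw [dotProduct, Finset.sum_mul]
  exact Finset.sum_le_sum fun i _ => mul_le_mul_of_nonneg_left
    ((le_abs_self _).trans (norm_le_pi_norm w i)) (hv i)

theorem Matrix.eventually_mulVec_apply_lt {ι : Type*} [Fintype ι] (A : Matrix ι ι ℝ) {c : ℝ}
    (hc : 0 < c) : ∀ᶠ w in 𝓝 0, ∀ i, (A *ᵥ w) i < c := by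
  have hA : Tendsto (A *ᵥ ·) (𝓝 0) (𝓝 0) := by
    simpa using (continuous_const.matrix_mulVec continuous_id).tendsto (0 : ι → ℝ)
  exact eventually_all.2 fun i => (tendsto_pi_nhds.1 hA i).eventually_lt_const hc

theorem Matrix.exists_nonneg_norm_smul_le_vecMul {ι : Type*} [Fintype ι] [DecidableEq ι]
    {B : Matrix ι ι ℝ} (hB : ∀ i j, 0 ≤ B i j) {μ : ℂ}
    (hμ : μ ∈ spectrum ℂ (B.map Complex.ofReal)) :
    ∃ v : ι → ℝ, 0 ≤ v ∧ v ≠ 0 ∧ ‖μ‖ • v ≤ v ᵥ* B := by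
  rw [spectrum.mem_iff, isUnit_iff_isUnit_det, isUnit_iff_ne_zero, not_not] at hμ
  obtain ⟨z, hz, hzB⟩ := exists_vecMul_eq_zero_iff.2 hμ
  rw [Algebra.algebraMap_eq_smul_one, vecMul_sub, vecMul_smul, vecMul_one, sub_eq_zero] at hzB
  refine ⟨fun i => ‖z i‖, fun i => norm_nonneg _, fun h => hz ?_, fun i => ?_⟩
  · funext i
    exact norm_eq_zero.1 (congrFun h i)
  calc ‖μ‖ * ‖z i‖ = ‖(z ᵥ* B.map Complex.ofReal) i‖ := by
        rw [← hzB, Pi.smul_apply, smul_eq_mul, norm_mul]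
    _ ≤ ∑ j, ‖z j‖ * B j i := by
      refine (norm_sum_le _ _).trans_eq (Finset.sum_congr rfl fun j _ => ?_)
      simp [Real.norm_of_nonneg (hB j i)]

theorem exists_mem_spectrum_lt_norm_of_lt_specRad {n : ℕ} {A : Matrix (Fin n) (Fin n) ℝ} {s : ℝ}
    (hs : 0 ≤ s) (hA : s < specRad A) :
    ∃ μ ∈ spectrum ℂ (A.map Complex.ofReal), s < ‖μ‖ := by
  have hne : {r : ℝ | ∃ μ ∈ spectrum ℂ (A.map Complex.ofReal), ‖μ‖ = r}.Nonempty := by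
    by_contra h
    rw [Set.not_nonempty_iff_eq_empty] at h
    rw [specRad, h, Real.sSup_empty] at hA
    exact hs.not_gt hA
  obtain ⟨_, ⟨μ, hμ, rfl⟩, hsμ⟩ := exists_lt_of_lt_csSup hne hA
  exact ⟨μ, hμ, hsμ⟩

theorem eventually_slope_sup'_lt {ι : Type*} [Fintype ι] [Nonempty ι] {φ : ι → ℝ → ℝ}
    {x r : ℝ} (hr : 0 ≤ r) (hφ : ∀ i, ContinuousWithinAt (φ i) (Ioi x) x)
    (hact : ∀ i, φ i x = Finset.univ.sup' Finset.univ_nonempty (φ · x) →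
      ∀ᶠ z in 𝓝[>] x, slope (φ i) x z < r) :
    ∀ᶠ z in 𝓝[>] x, slope (fun t => Finset.univ.sup' Finset.univ_nonempty (φ · t)) x z < r := by
  have hi : ∀ i, ∀ᶠ z in 𝓝[>] x,
      (z - x)⁻¹ * (φ i z - Finset.univ.sup' Finset.univ_nonempty (φ · x)) < r := by
    intro i
    rcases (Finset.le_sup' (φ · x) (Finset.mem_univ i)).lt_or_eq with hlt | heq
    · filter_upwards [(hφ i).eventually_lt_const hlt, self_mem_nhdsWithin] with z hz hxz
      exact (mul_neg_of_pos_of_neg (inv_pos.2 (sub_pos.2 hxz)) (sub_neg.2 hz)).trans_le hr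
    · filter_upwards [hact i heq] with z hz
      rwa [← heq, ← smul_eq_mul, ← slope_def_module]
  filter_upwards [eventually_all.2 hi] with z hz
  obtain ⟨i, -, hi⟩ := Finset.exists_mem_eq_sup' Finset.univ_nonempty (φ · z)
  rw [slope_def_module, smul_eq_mul, hi]
  exact hz i

theorem nonneg_of_forall_min_mul_le_deriv {ι : Type*} [Fintype ι] {u u' : ℝ → ι → ℝ} {K : ℝ}
    (hu : ∀ t ∈ Ici (0 : ℝ), HasDerivWithinAt u (u' t) (Ici 0) t) (h0 : 0 ≤ u 0)
    (hmin : ∀ t ∈ Ici (0 : ℝ), ∀ i, u t i ≤ 0 → (∀ j, u t i ≤ u t j) → K * u t i ≤ u' t i) :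
    ∀ t ∈ Ici (0 : ℝ), 0 ≤ u t := by
  -- `g t = max 0 (maxᵢ (-u t i))` measures how far `u t` lies below the nonnegative orthant.
  let φ : Option ι → ℝ → ℝ := fun o t => o.elim 0 fun i => -u t i
  let g : ℝ → ℝ := fun t => Finset.univ.sup' Finset.univ_nonempty (φ · t)
  have hφg : ∀ o t, φ o t ≤ g t := fun o t => Finset.le_sup' (φ · t) (Finset.mem_univ o)
  have hg_nonneg : ∀ t, 0 ≤ g t := hφg none
  have hug : ∀ t i, -u t i ≤ g t := fun t i => hφg (some i) t
  have hcont : ∀ o, ContinuousOn (φ o) (Ici 0) := by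
    rintro (_ | i)
    · exact continuousOn_const
    · exact fun t ht => ((hasDerivWithinAt_pi.1 (hu t ht) i).continuousWithinAt).neg
  have hslope : ∀ x ∈ Ici (0 : ℝ), ∀ r, max K 0 * g x < r → ∀ᶠ z in 𝓝[>] x, slope g x z < r := by
    intro x hx r hr
    have hr0 : 0 < r := (mul_nonneg (le_max_right K 0) (hg_nonneg x)).trans_lt hr
    refine eventually_slope_sup'_lt hr0.le
      (fun o => (hcont o x hx).mono (Ioi_subset_Ici hx)) fun o hact => ?_
    rcases o with _ | i
    · exact Eventually.of_forall fun z => by simpa [φ, slope] using hr0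
    have hgx : -u x i = g x := hact
    have hK : K * u x i ≤ u' x i :=
      hmin x hx i (by linarith [hg_nonneg x]) fun j => by linarith [hug x j]
    have hder : HasDerivWithinAt (φ (some i)) (-u' x i) (Ioi x) x :=
      (hasDerivWithinAt_pi.1 (hu x hx) i).neg.mono (Ioi_subset_Ici hx)
    refine hder.limsup_slope_le' (lt_irrefl x) ?_
    nlinarith [le_max_left K 0, le_max_right K 0, hg_nonneg x]
  have hg_zero : g 0 ≤ 0 := Finset.sup'_le _ _ fun o _ => by
    rcases o with _ | j
    · exact le_rfl
    · simpa [φ] using h0 j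
  intro T hT i
  show 0 ≤ u T i
  have hgT : g T ≤ 0 := by
    simpa only [gronwallBound_ε0_δ0] using le_gronwallBound_of_liminf_deriv_right_le
      (f' := fun t => max K 0 * g t) (ε := 0)
      ((ContinuousOn.finset_sup'_apply _ fun o _ => hcont o).mono Icc_subset_Ici_self)
      (fun x hx r hr => (hslope x hx.1 r hr).frequently) hg_zero (fun x _ => (add_zero _).ge)
      T ⟨hT, le_rfl⟩
  linarith [hug T i]

theorem mul_exp_le_of_mul_le_deriv {f f' : ℝ → ℝ} {K : ℝ}
    (hf : ∀ t ∈ Ici (0 : ℝ), HasDerivWithinAt f (f' t) (Ici 0) t)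
    (hK : ∀ t ∈ Ici (0 : ℝ), K * f t ≤ f' t) :
    ∀ t ∈ Ici (0 : ℝ), f 0 * Real.exp (K * t) ≤ f t := by
  intro T hT
  have := le_gronwallBound_of_liminf_deriv_right_le (f := fun t => -f t) (f' := fun t => -f' t)
    (δ := -f 0) (ε := 0)
    (fun x hx => ((hf x hx.1).continuousWithinAt.mono Icc_subset_Ici_self).neg)
    (fun x hx r hr => ((hf x hx.1).neg.mono (Ici_subset_Ici.2 hx.1)).liminf_right_slope_le hr)
    le_rfl (fun x hx => by linarith [hK x hx.1]) T ⟨hT, le_rfl⟩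
  rw [gronwallBound_ε0, sub_zero] at this
  linarith

theorem tendsto_atTop_of_mul_le_deriv {f f' : ℝ → ℝ} {K : ℝ}
    (hf : ∀ t ∈ Ici (0 : ℝ), HasDerivWithinAt f (f' t) (Ici 0) t) (hK0 : 0 < K)
    (hK : ∀ t ∈ Ici (0 : ℝ), K * f t ≤ f' t) (h0 : 0 < f 0) :
    Tendsto f atTop atTop := by
  refine tendsto_atTop_mono' _ ?_
    ((Real.tendsto_exp_atTop.comp (tendsto_id.const_mul_atTop hK0)).const_mul_atTop h0)
  filter_upwards [eventually_ge_atTop 0] with t ht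
  exact mul_exp_le_of_mul_le_deriv hf hK t ht

section SIS

variable {n : ℕ} {P : Matrix (Fin n) (Fin n) ℝ} {β b d γ : Fin n → ℝ} {I : ℝ → Fin n → ℝ}

theorem Vmat_inv (hdγ : ∀ i, d i + γ i ≠ 0) :
    (Vmat d γ)⁻¹ = -diagonal (fun i => (d i + γ i)⁻¹) := by
  refine inv_eq_right_inv ?_
  rw [Vmat, neg_mul_neg, diagonal_mul_diagonal, ← diagonal_one]
  exact congrArg diagonal (funext fun i => mul_inv_cancel₀ (hdγ i))

theorem Mmat_apply (i j : Fin n) :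
    Mmat P β b d i j = ∑ k, P i k * β k * (Ntil P b d k)⁻¹ * P j k := by
  rw [Mmat, mul_apply]
  exact Finset.sum_congr rfl fun k _ => by rw [mul_diagonal, mul_diagonal, transpose_apply]

theorem Mmat_nonneg (hP : ∀ i j, 0 ≤ P i j) (hβ : ∀ j, 0 ≤ β j) (hN : ∀ i, 0 ≤ Nbar b d i)
    (i j : Fin n) : 0 ≤ Mmat P β b d i j := by
  have hNtil : ∀ k, 0 ≤ Ntil P b d k := fun k =>
    Finset.sum_nonneg fun l _ => mul_nonneg (hP l k) (hN l)
  rw [Mmat_apply]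
  exact Finset.sum_nonneg fun k _ =>
    mul_nonneg (mul_nonneg (mul_nonneg (hP i k) (hβ k)) (inv_nonneg.2 (hNtil k))) (hP j k)

theorem Fmat_nonneg (hP : ∀ i j, 0 ≤ P i j) (hβ : ∀ j, 0 ≤ β j) (hN : ∀ i, 0 ≤ Nbar b d i)
    (i j : Fin n) : 0 ≤ Fmat P β b d i j := by
  rw [Fmat, diagonal_mul]
  exact mul_nonneg (hN i) (Mmat_nonneg hP hβ hN i j)

theorem exists_subinvariant_of_one_lt_R0 (hF : ∀ i j, 0 ≤ Fmat P β b d i j)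
    (hdγ : ∀ i, 0 < d i + γ i) (hR0 : 1 < R0 P β b d γ) :
    ∃ r > (1 : ℝ), ∃ v : Fin n → ℝ, 0 ≤ v ∧ v ≠ 0 ∧ r • ((d + γ) * v) ≤ v ᵥ* Fmat P β b d := by
  have hB : -(Fmat P β b d * (Vmat d γ)⁻¹) = Fmat P β b d * diagonal (fun i => (d i + γ i)⁻¹) := by
    rw [Vmat_inv fun i => (hdγ i).ne', mul_neg, neg_neg]
  rw [R0, hB] at hR0
  obtain ⟨μ, hμ, hμ1⟩ := exists_mem_spectrum_lt_norm_of_lt_specRad zero_le_one hR0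
  obtain ⟨v, hv0, hv, hvB⟩ := exists_nonneg_norm_smul_le_vecMul
    (fun i j => by simpa only [mul_diagonal] using mul_nonneg (hF i j) (inv_nonneg.2 (hdγ j).le)) hμ
  refine ⟨‖μ‖, hμ1, v, hv0, hv, fun i => ?_⟩
  have hi := hvB i
  rw [← vecMul_vecMul, vecMul_diagonal] at hi
  simp only [Pi.smul_apply, Pi.mul_apply, Pi.add_apply, smul_eq_mul] at hi ⊢
  rw [← div_eq_mul_inv, le_div_iff₀ (hdγ i)] at hi
  linarith

theorem Gfield_eq (w : Fin n → ℝ) :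
    Gfield P β b d γ w = Fmat P β b d *ᵥ w - w * (Mmat P β b d *ᵥ w) - (d + γ) * w := by
  ext i
  simp only [Gfield, Fmat, ← mulVec_mulVec, mulVec_diagonal, Pi.sub_apply, Pi.mul_apply,
    Pi.add_apply]
  ring

theorem mul_le_Gfield_apply_of_forall_le (hM : ∀ i j, 0 ≤ Mmat P β b d i j) {w : Fin n → ℝ}
    {i : Fin n} {K : ℝ} (hdγ : 0 ≤ d i + γ i) (hwi : w i ≤ 0) (hmin : ∀ j, w i ≤ w j)
    (hN : 0 ≤ Nbar b d i - w i) (hK : (Nbar b d i - w i) * ∑ j, Mmat P β b d i j ≤ K) :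
    K * w i ≤ Gfield P β b d γ w i := by
  have hMw : (∑ j, Mmat P β b d i j) * w i ≤ (Mmat P β b d *ᵥ w) i := by
    rw [Finset.sum_mul]
    exact Finset.sum_le_sum fun j _ => mul_le_mul_of_nonneg_left (hmin j) (hM i j)
  calc K * w i ≤ (Nbar b d i - w i) * ((∑ j, Mmat P β b d i j) * w i) := by
        rw [← mul_assoc]; exact mul_le_mul_of_nonpos_right hK hwi
    _ ≤ (Nbar b d i - w i) * (Mmat P β b d *ᵥ w) i := mul_le_mul_of_nonneg_left hMw hN
    _ ≤ Gfield P β b d γ w i := by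
        rw [Gfield]; linarith [mul_nonpos_of_nonneg_of_nonpos hdγ hwi]

theorem mul_dotProduct_le_dotProduct_Gfield {v w : Fin n → ℝ} {r c : ℝ} (hv : 0 ≤ v)
    (hw : 0 ≤ w) (hvF : r • ((d + γ) * v) ≤ v ᵥ* Fmat P β b d)
    (hc : ∀ i, c + (Mmat P β b d *ᵥ w) i ≤ (r - 1) * (d i + γ i)) :
    c * (v ⬝ᵥ w) ≤ v ⬝ᵥ Gfield P β b d γ w := by
  have hFw := dotProduct_le_dotProduct_of_nonneg_right hvF hw
  rw [Gfield_eq, dotProduct_sub, dotProduct_sub, dotProduct_mulVec]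
  refine le_trans ?_ (sub_le_sub_right (sub_le_sub_right hFw _) _)
  simp only [dotProduct, Finset.mul_sum, ← Finset.sum_sub_distrib]
  refine Finset.sum_le_sum fun i _ => ?_
  have hi := mul_le_mul_of_nonneg_left (hc i) (mul_nonneg (hv i) (hw i))
  simp only [Pi.smul_apply, Pi.mul_apply, Pi.add_apply, smul_eq_mul]
  linarith

theorem IsSol.nonneg (hI : IsSol P β b d γ I) (hM : ∀ i j, 0 ≤ Mmat P β b d i j)
    (hdγ : ∀ i, 0 ≤ d i + γ i) (hN : ∀ i, 0 ≤ Nbar b d i) {R : ℝ}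
    (hR : ∀ t ∈ Ici (0 : ℝ), ‖I t‖ ≤ R) (h0 : 0 ≤ I 0) : ∀ t ∈ Ici (0 : ℝ), 0 ≤ I t := by
  obtain ⟨K, hK⟩ := Finite.bddAbove_range fun i => (Nbar b d i + R) * ∑ j, Mmat P β b d i j
  refine nonneg_of_forall_min_mul_le_deriv (K := K) hI h0 fun t ht i hti hmin =>
    mul_le_Gfield_apply_of_forall_le hM (hdγ i) hti hmin (by linarith [hN i]) ?_
  have hIR : -I t i ≤ R :=
    (neg_le_abs _).trans ((norm_le_pi_norm (I t) i).trans (hR t ht))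
  exact (mul_le_mul_of_nonneg_right (by linarith) (Finset.sum_nonneg fun j _ => hM i j)).trans
    (hK ⟨i, rfl⟩)

theorem IsSol.tendsto_dotProduct_atTop (hI : IsSol P β b d γ I) {v : Fin n → ℝ} {r c : ℝ}
    (hc : 0 < c) (hv : 0 ≤ v) (hvF : r • ((d + γ) * v) ≤ v ᵥ* Fmat P β b d)
    (hpos : ∀ t ∈ Ici (0 : ℝ), 0 ≤ I t)
    (hcM : ∀ t ∈ Ici (0 : ℝ), ∀ i, c + (Mmat P β b d *ᵥ I t) i ≤ (r - 1) * (d i + γ i))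
    (h0 : 0 < v ⬝ᵥ I 0) :
    Tendsto (fun t => v ⬝ᵥ I t) atTop atTop :=
  tendsto_atTop_of_mul_le_deriv
    (fun t ht => HasDerivWithinAt.fun_sum fun i _ =>
      (hasDerivWithinAt_pi.1 (hI t ht) i).const_mul (v i))
    hc (fun t ht => mul_dotProduct_le_dotProduct_Gfield hv (hpos t ht) hvF (hcM t ht)) h0

theorem exists_smul_mem_OmegaSet {v : Fin n → ℝ} (hN : ∀ i, 0 < Nbar b d i)
    (hv : 0 ≤ v) {δ : ℝ} (hδ : 0 < δ) : ∃ s > (0 : ℝ), s • v ∈ OmegaSet b d ∧ ‖s • v‖ < δ := by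
  have hsv : Tendsto (fun s : ℝ => s • v) (𝓝 0) (𝓝 0) := by
    simpa using (tendsto_id (x := 𝓝 (0 : ℝ))).smul_const v
  have h : ∀ᶠ s in 𝓝[>] (0 : ℝ), 0 < s ∧ (∀ i, s * v i < Nbar b d i) ∧ ‖s • v‖ < δ :=
    eventually_mem_nhdsWithin.and
      (((eventually_all.2 fun i => (tendsto_pi_nhds.1 hsv i).eventually_lt_const (hN i)).and
        (hsv.norm.eventually_lt_const (by simpa using hδ))).filter_mono nhdsWithin_le_nhds)
  obtain ⟨s, hs, hsN, hsδ⟩ := h.exists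
  exact ⟨s, hs, fun i => ⟨mul_nonneg (le_of_lt hs) (hv i), (hsN i).le⟩, hsδ⟩

end SIS

theorem sis_dfe_unstable_general
    {n : ℕ} (b d γ β : Fin n → ℝ) (P : Matrix (Fin n) (Fin n) ℝ)
    (hb : ∀ i, 0 < b i) (hd : ∀ i, 0 < d i) (hγ : ∀ i, 0 ≤ γ i) (hβ : ∀ j, 0 < β j)
    (hP0 : ∀ i j, 0 ≤ P i j) (hR0 : 1 < R0 P β b d γ) :
    ∃ U ∈ nhds (0 : Fin n → ℝ), ∀ δ > (0 : ℝ), ∃ I0 ∈ OmegaSet b d,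
      0 < ‖I0‖ ∧ ‖I0‖ < δ ∧
      ∀ I : ℝ → Fin n → ℝ, IsSol P β b d γ I → I 0 = I0 →
        ∃ t ≥ (0 : ℝ), I t ∉ U := by
  have hN : ∀ i, 0 < Nbar b d i := fun i => div_pos (hb i) (hd i)
  have hdγ : ∀ i, 0 < d i + γ i := fun i => add_pos_of_pos_of_nonneg (hd i) (hγ i)
  have hM := Mmat_nonneg hP0 (fun j => (hβ j).le) fun i => (hN i).le
  obtain ⟨r, hr, v, hv0, hv, hvF⟩ := exists_subinvariant_of_one_lt_R0
    (Fmat_nonneg hP0 (fun j => (hβ j).le) fun i => (hN i).le) hdγ hR0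
  obtain ⟨c, hc, hcr⟩ := exists_pos_forall_lt fun i => half_pos (mul_pos (sub_pos.2 hr) (hdγ i))
  obtain ⟨ε, hε, hεM⟩ := Metric.mem_nhds_iff.1 ((Mmat P β b d).eventually_mulVec_apply_lt hc)
  refine ⟨Metric.ball 0 ε, Metric.ball_mem_nhds 0 hε, fun δ hδ => ?_⟩
  obtain ⟨s, hs, hsΩ, hsδ⟩ := exists_smul_mem_OmegaSet hN hv0 hδ
  refine ⟨s • v, hsΩ, norm_pos_iff.2 (smul_ne_zero hs.ne' hv), hsδ, fun I hI hI0 => ?_⟩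
  by_contra! hU
  have hIε : ∀ t ∈ Ici (0 : ℝ), ‖I t‖ < ε := fun t ht => mem_ball_zero_iff.1 (hU t ht)
  have hpos := hI.nonneg hM (fun i => (hdγ i).le) (fun i => (hN i).le) (fun t ht => (hIε t ht).le)
    (hI0 ▸ smul_nonneg hs.le hv0)
  have hvv : 0 < v ⬝ᵥ v := (dotProduct_nonneg_of_nonneg hv0 hv0).lt_of_ne'
    (dotProduct_self_eq_zero.not.2 hv)
  have hgrow := hI.tendsto_dotProduct_atTop hc hv0 hvF hpos
    (fun t ht i => by linarith [hεM (hU t ht) i, hcr i]) (by rw [hI0, dotProduct_smul]; positivity)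
  obtain ⟨t, hbig, ht⟩ :=
    ((hgrow.eventually_gt_atTop ((∑ i, v i) * ε)).and (eventually_ge_atTop 0)).exists
  exact hbig.not_ge ((dotProduct_le_sum_mul_norm hv0 _).trans
    (mul_le_mul_of_nonneg_left (hIε t ht).le (Finset.sum_nonneg fun i _ => hv0 i)))

/-- if P is irreducible and R₀ > 1 then the DFE is unstable: there is a
neighborhood U of 0 such that for every δ > 0 some initial condition in Ω of norm
less than δ (and positive) has its solution leave U in finite time. -/
theorem sis_dfe_unstable
    {n : ℕ} (hn : 1 ≤ n) (b d γ β : Fin n → ℝ) (P : Matrix (Fin n) (Fin n) ℝ)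
    (hb : ∀ i, 0 < b i) (hd : ∀ i, 0 < d i) (hγ : ∀ i, 0 ≤ γ i) (hβ : ∀ j, 0 < β j)
    (hP0 : ∀ i j, 0 ≤ P i j) (hP1 : ∀ i j, P i j ≤ 1)
    (hrow : ∀ i, ∑ j, P i j = 1) (hcol : ∀ j, ∃ k, 0 < P k j)
    (hirr : MatIrred P) (hR0 : 1 < R0 P β b d γ) :
    ∃ U ∈ nhds (0 : Fin n → ℝ), ∀ δ > (0 : ℝ), ∃ I0 ∈ OmegaSet b d,
      0 < ‖I0‖ ∧ ‖I0‖ < δ ∧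
      ∀ I : ℝ → Fin n → ℝ, IsSol P β b d γ I → I 0 = I0 →
        ∃ t ≥ (0 : ℝ), I t ∉ U :=
  sis_dfe_unstable_general b d γ β P hb hd hγ hβ hP0 hR0
end
end

section
/- Fix a patch i and suppose Condition H holds for patch i, and that R0^i · Σ_{j=1}^n (β_j/β_i) p_{ij} < 1 (equivalently Σ_{j=1}^n β_j p_{ij} < d_i + γ_i). Then the disease goes extinct in patch i: every solution I : [0,∞) → ℝ^n of I'(t) = G(I(t)) with I(0) ∈ Ω satisfies I_i(t) → 0 as t → ∞. -/
open Matrix Filter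

noncomputable section

/-- The Jacobian matrix DX(I) = diag(N̄ − I)·M + V − diag(M·I) of the SIS vector field. -/
def DXmat {n : ℕ} (P : Matrix (Fin n) (Fin n) ℝ) (β b d γ : Fin n → ℝ)
    (I : Fin n → ℝ) : Matrix (Fin n) (Fin n) ℝ :=
  Matrix.diagonal (fun i => Nbar b d i - I i) * Mmat P β b d + Vmat d γ -
    Matrix.diagonal ((Mmat P β b d).mulVec I)

/-- The isolated-patch reproduction number R₀ⁱ = βᵢ/(dᵢ + γᵢ). -/
def R0i {n : ℕ} (β d γ : Fin n → ℝ) (i : Fin n) : ℝ := β i / (d i + γ i)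

/-- The patch reproduction number R₀ⁱ(P) = (∑ⱼ βⱼ p_{ij}² N̄ᵢ / Ñⱼ)/(dᵢ + γᵢ). -/
def R0iP {n : ℕ} (P : Matrix (Fin n) (Fin n) ℝ) (β b d γ : Fin n → ℝ) (i : Fin n) : ℝ :=
  (∑ j, β j * (P i j) ^ 2 * Nbar b d i / Ntil P b d j) / (d i + γ i)

/-- Condition H for patch i: whenever p_{ij} > 0, no other patch k ≠ i visits patch j. -/
def CondH {n : ℕ} (P : Matrix (Fin n) (Fin n) ℝ) (i : Fin n) : Prop :=
  ∀ j, 0 < P i j → ∀ k, k ≠ i → P k j = 0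

section AuxLemmas

variable {n : ℕ}

lemma Ntil_pos_aux (P : Matrix (Fin n) (Fin n) ℝ) (b d : Fin n → ℝ)
    (hb : ∀ i, 0 < b i) (hd : ∀ i, 0 < d i) (hP0 : ∀ i j, 0 ≤ P i j)
    (hcol : ∀ j, ∃ k, 0 < P k j) (j : Fin n) : 0 < Ntil P b d j := by
  obtain ⟨k, hk⟩ := hcol j
  have hNbar : ∀ m, 0 < Nbar b d m := fun m => div_pos (hb m) (hd m)
  refine Finset.sum_pos' (fun m _ => mul_nonneg (hP0 m j) (hNbar m).le) ?_
  exact ⟨k, Finset.mem_univ k, mul_pos hk (hNbar k)⟩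

lemma mulVec_Mmat_eq (P : Matrix (Fin n) (Fin n) ℝ) (β b d : Fin n → ℝ)
    (hP0 : ∀ i j, 0 ≤ P i j) (i : Fin n) (hH : CondH P i) (I : Fin n → ℝ) :
    (Mmat P β b d).mulVec I i
      = (∑ j, P i j * β j * (Ntil P b d j)⁻¹ * P i j) * I i := by
  have hent : ∀ k, Mmat P β b d i k
      = ∑ j, P i j * β j * (Ntil P b d j)⁻¹ * P k j := by
    intro k
    rw [Mmat, Matrix.mul_apply]
    refine Finset.sum_congr rfl fun j _ => ?_
    rw [Matrix.mul_diagonal, Matrix.mul_diagonal, Matrix.transpose_apply]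
  have : (Mmat P β b d).mulVec I i = ∑ k, Mmat P β b d i k * I k := by
    simp [Matrix.mulVec, dotProduct]
  rw [this]
  calc ∑ k, Mmat P β b d i k * I k
      = ∑ k, ∑ j, (P i j * β j * (Ntil P b d j)⁻¹ * P k j) * I k := by
        refine Finset.sum_congr rfl fun k _ => ?_
        rw [hent k, Finset.sum_mul]
    _ = ∑ j, ∑ k, (P i j * β j * (Ntil P b d j)⁻¹ * P k j) * I k := Finset.sum_comm
    _ = ∑ j, (P i j * β j * (Ntil P b d j)⁻¹ * P i j) * I i := by
        refine Finset.sum_congr rfl fun j _ => ?_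
        rcases eq_or_lt_of_le (hP0 i j) with h0 | hpos
        · simp [← h0]
        · rw [Finset.sum_eq_single i]
          · intro k _ hk
            rw [hH j hpos k hk]; ring
          · intro h; exact absurd (Finset.mem_univ i) h
    _ = (∑ j, P i j * β j * (Ntil P b d j)⁻¹ * P i j) * I i := by
        rw [Finset.sum_mul]

end AuxLemmas

/-- under Condition H for patch i, if R₀ⁱ · ∑ⱼ (βⱼ/βᵢ) p_{ij} < 1 then
the disease goes extinct in patch i: Iᵢ(t) → 0 along every solution starting in Ω. -/
theorem sis_patch_extinction
    {n : ℕ} (hn : 1 ≤ n) (b d γ β : Fin n → ℝ) (P : Matrix (Fin n) (Fin n) ℝ)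
    (hb : ∀ i, 0 < b i) (hd : ∀ i, 0 < d i) (hγ : ∀ i, 0 ≤ γ i) (hβ : ∀ j, 0 < β j)
    (hP0 : ∀ i j, 0 ≤ P i j) (hP1 : ∀ i j, P i j ≤ 1)
    (hrow : ∀ i, ∑ j, P i j = 1) (hcol : ∀ j, ∃ k, 0 < P k j)
    (i : Fin n) (hH : CondH P i)
    (hlt : R0i β d γ i * ∑ j, (β j / β i) * P i j < 1) :
    ∀ I : ℝ → Fin n → ℝ, IsSol P β b d γ I → I 0 ∈ OmegaSet b d →
      Tendsto (fun t => I t i) atTop (nhds 0) := by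
  -- Notation
  set a : ℝ := d i + γ i with ha_def
  set Nb : ℝ := Nbar b d i with hNb_def
  set c : ℝ := ∑ j, P i j * β j * (Ntil P b d j)⁻¹ * P i j with hc_def
  have ha : 0 < a := add_pos_of_pos_of_nonneg (hd i) (hγ i)
  have hNtil : ∀ j, 0 < Ntil P b d j := Ntil_pos_aux P b d hb hd hP0 hcol
  have hNbpos : 0 < Nb := div_pos (hb i) (hd i)
  have hc0 : 0 ≤ c := by
    refine Finset.sum_nonneg fun j _ => ?_
    exact mul_nonneg (mul_nonneg (mul_nonneg (hP0 i j) (hβ j).le)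
      (inv_nonneg.2 (hNtil j).le)) (hP0 i j)
  -- From the hypothesis: ∑ⱼ βⱼ p_{ij} < a
  have hsum : ∑ j, β j * P i j < a := by
    have hkey : ∀ j, R0i β d γ i * ((β j / β i) * P i j) = β j * P i j / a := by
      intro j
      have hai : d i + γ i ≠ 0 := by positivity
      rw [R0i, ← ha_def]
      field_simp [ha.ne', (hβ i).ne']
    rw [Finset.mul_sum] at hlt
    simp_rw [hkey] at hlt
    rw [← Finset.sum_div, div_lt_one ha] at hlt
    exact hlt
  -- c · N̄ᵢ ≤ ∑ⱼ βⱼ p_{ij}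
  have hcNb : c * Nb ≤ ∑ j, β j * P i j := by
    rw [hc_def, Finset.sum_mul]
    refine Finset.sum_le_sum fun j _ => ?_
    have hle : P i j * Nb ≤ Ntil P b d j := by
      have := Finset.single_le_sum (f := fun k => P k j * Nbar b d k)
        (fun k _ => mul_nonneg (hP0 k j) (div_pos (hb k) (hd k)).le) (Finset.mem_univ i)
      simpa [Ntil, hNb_def] using this
    have h1 : P i j * Nb / Ntil P b d j ≤ 1 := (div_le_one (hNtil j)).2 hle
    calc P i j * β j * (Ntil P b d j)⁻¹ * P i j * Nb
        = (β j * P i j) * (P i j * Nb / Ntil P b d j) := by ring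
      _ ≤ (β j * P i j) * 1 :=
          mul_le_mul_of_nonneg_left h1 (mul_nonneg (hβ j).le (hP0 i j))
      _ = β j * P i j := mul_one _
  set ε : ℝ := a - c * Nb with hε_def
  have hε : 0 < ε := sub_pos.2 (lt_of_le_of_lt hcNb hsum)
  -- The solution
  intro I hsol h0
  set x : ℝ → ℝ := fun t => I t i with hx_def
  set q : ℝ → ℝ := fun y => c * (Nb - y) - a with hq_def
  have hx : ∀ t ∈ Set.Ici (0 : ℝ), HasDerivWithinAt x (x t * q (x t)) (Set.Ici 0) t := by
    intro t ht
    have h := hasDerivWithinAt_pi.1 (hsol t ht) i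
    have heq : Gfield P β b d γ (I t) i = x t * q (x t) := by
      show (Nbar b d i - I t i) * (Mmat P β b d).mulVec (I t) i - (d i + γ i) * I t i
        = x t * q (x t)
      rw [mulVec_Mmat_eq P β b d hP0 i hH]
      simp only [hx_def, hq_def, ← hc_def, ← hNb_def, ← ha_def]
      ring
    rwa [heq] at h
  have hxc : ContinuousOn x (Set.Ici 0) := fun t ht => (hx t ht).continuousWithinAt
  -- Extend to a continuous integrand
  set y : ℝ → ℝ := fun t => x (max t 0) with hy_def
  have hyc : Continuous y :=
    hxc.comp_continuous (continuous_id.max continuous_const) fun t => le_max_right t 0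
  set w : ℝ → ℝ := fun t => q (y t) with hw_def
  have hwc : Continuous w := by
    simp only [hw_def, hq_def]
    exact (continuous_const.mul (continuous_const.sub hyc)).sub continuous_const
  set W : ℝ → ℝ := fun t => ∫ s in (0 : ℝ)..t, w s with hW_def
  have hW : ∀ t, HasDerivAt W (w t) t := fun t =>
    (hwc.integral_hasStrictDerivAt 0 t).hasDerivAt
  have hWc : Continuous W := continuous_iff_continuousAt.2 fun t => (hW t).continuousAt
  have hW0 : W 0 = 0 := intervalIntegral.integral_same
  -- x t = x 0 · exp (W t) on [0, ∞)
  have key : ∀ t ∈ Set.Ici (0 : ℝ), x t = x 0 * Real.exp (W t) := by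
    intro T hT
    have hT0 : (0 : ℝ) ≤ T := hT
    set F : ℝ → ℝ := fun t => x t * Real.exp (-W t) with hF_def
    have hFc : ContinuousOn F (Set.Icc 0 T) :=
      (hxc.mono Set.Icc_subset_Ici_self).mul
        ((Real.continuous_exp.comp hWc.neg).continuousOn)
    have hFd : ∀ t ∈ Set.Ico (0 : ℝ) T, HasDerivWithinAt F 0 (Set.Ici t) t := by
      intro t ht
      have h1 := hx t ht.1
      have h2 : HasDerivAt (fun s => Real.exp (-W s)) (Real.exp (-W t) * -w t) t :=
        ((hW t).neg).exp
      have h3 := h1.mul h2.hasDerivWithinAt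
      have hyt : y t = x t := by simp [hy_def, max_eq_left ht.1]
      have hwt : w t = q (x t) := by simp only [hw_def]; rw [hyt]
      have : x t * q (x t) * Real.exp (-W t) + x t * (Real.exp (-W t) * -w t) = 0 := by
        rw [hwt]; ring
      rw [this] at h3
      exact h3.mono (Set.Ici_subset_Ici.2 ht.1)
    have hconst := constant_of_has_deriv_right_zero hFc hFd T (Set.right_mem_Icc.2 hT0)
    have hF0 : F 0 = x 0 := by simp [hF_def, hW0]
    have hFT : x T * Real.exp (-W T) = x 0 := by
      rw [← hF0]; exact hconst
    have : x T * Real.exp (-W T) * Real.exp (W T) = x 0 * Real.exp (W T) := by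
      rw [hFT]
    rwa [mul_assoc, ← Real.exp_add, neg_add_cancel, Real.exp_zero, mul_one] at this
  have hx0 : 0 ≤ x 0 := (h0 i).1
  have hxnn : ∀ t ∈ Set.Ici (0 : ℝ), 0 ≤ x t := fun t ht => by
    rw [key t ht]; exact mul_nonneg hx0 (Real.exp_pos _).le
  -- W t ≤ -(ε t)
  have hWle : ∀ t ∈ Set.Ici (0 : ℝ), W t ≤ -(ε * t) := by
    intro t ht
    have hbound : ∀ s ∈ Set.Icc (0 : ℝ) t, w s ≤ -ε := by
      intro s hs
      have hys : y s = x s := by simp [hy_def, max_eq_left hs.1]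
      have hxs : 0 ≤ x s := hxnn s hs.1
      show q (y s) ≤ -ε
      rw [hys, hq_def]
      have : c * (Nb - x s) ≤ c * Nb :=
        mul_le_mul_of_nonneg_left (sub_le_self Nb hxs) hc0
      simp only [hε_def]
      linarith
    have hint := intervalIntegral.integral_mono_on (μ := MeasureTheory.volume)
      (f := w) (g := fun _ => -ε) ht (hwc.intervalIntegrable 0 t)
      intervalIntegrable_const hbound
    rw [intervalIntegral.integral_const, smul_eq_mul, sub_zero] at hint
    calc W t ≤ t * -ε := hint
      _ = -(ε * t) := by ring
  have hupper : ∀ t ∈ Set.Ici (0 : ℝ), x t ≤ x 0 * Real.exp (-(ε * t)) := by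
    intro t ht
    rw [key t ht]
    exact mul_le_mul_of_nonneg_left (Real.exp_le_exp.2 (hWle t ht)) hx0
  -- Conclude by squeezing
  have hlim : Tendsto (fun t : ℝ => x 0 * Real.exp (-(ε * t))) atTop (nhds 0) := by
    have h1 : Tendsto (fun t : ℝ => -(ε * t)) atTop atBot :=
      tendsto_neg_atTop_atBot.comp (tendsto_id.const_mul_atTop hε)
    have h2 : Tendsto (fun t : ℝ => Real.exp (-(ε * t))) atTop (nhds 0) :=
      Real.tendsto_exp_atBot.comp h1
    simpa using h2.const_mul (x 0)
  refine tendsto_of_tendsto_of_tendsto_of_le_of_le' (g := fun _ : ℝ => (0 : ℝ))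
    tendsto_const_nhds hlim ?_ ?_
  · exact (eventually_ge_atTop (0 : ℝ)).mono fun t ht => hxnn t ht
  · exact (eventually_ge_atTop (0 : ℝ)).mono fun t ht => hupper t ht
end
end

section
/- Let Ī ∈ ℝ^n satisfy Ī_i > 0 for all i and the equilibrium equation (F + V)·Ī = diag(Ī)·M·Ī (equivalently G(Ī) = 0 with Ī below N̄). Then the Jacobian at Ī satisfies DX(Ī)·Ī = −diag(M·Ī)·Ī, and every component of this vector is strictly negative, i.e., (DX(Ī)·Ī)_i = −(M·Ī)_i·Ī_i < 0 for all i. -/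
open Matrix Filter

noncomputable section

/-! At any `I`, `DX(I)·I = G(I) - diag(M·I)·I`, and the equilibrium equation says exactly `G(Ī) = 0`.
Positivity of `(M·Ī)ᵢ`: row `i` of `P` sums to one, so some `p_{ij} > 0`; then `Ñⱼ ≥ p_{ij} N̄ᵢ > 0`
and `(M·Ī)ᵢ ≥ p_{ij}² βⱼ Īᵢ / Ñⱼ > 0`. -/

section MulDiagonalTranspose

variable {m o : Type*} [Fintype m] [Fintype o] [DecidableEq o]

lemma mul_diagonal_mul_transpose_mulVec_apply {R : Type*} [CommSemiring R]
    (A : Matrix m o R) (w : o → R) (v : m → R) (i : m) :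
    ((A * diagonal w * Aᵀ) *ᵥ v) i = ∑ j, A i j * w j * (Aᵀ *ᵥ v) j := by
  rw [← mulVec_mulVec, ← mulVec_mulVec, mulVec, dotProduct]
  simp only [mulVec_diagonal, mul_assoc]

lemma mul_diagonal_mul_transpose_mulVec_pos {A : Matrix m o ℝ} {w : o → ℝ} {v : m → ℝ}
    (hA : ∀ i j, 0 ≤ A i j) (hw : ∀ j, 0 ≤ w j) (hv : ∀ k, 0 < v k)
    {i : m} {j : o} (hij : 0 < A i j) (hwj : 0 < w j) :
    0 < ((A * diagonal w * Aᵀ) *ᵥ v) i := by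
  have hcol : ∀ j, 0 ≤ (Aᵀ *ᵥ v) j := fun j =>
    Finset.sum_nonneg fun k _ => mul_nonneg (hA k j) (hv k).le
  have hcolj : 0 < (Aᵀ *ᵥ v) j :=
    Finset.sum_pos' (fun k _ => mul_nonneg (hA k j) (hv k).le)
      ⟨i, Finset.mem_univ i, mul_pos hij (hv i)⟩
  rw [mul_diagonal_mul_transpose_mulVec_apply]
  exact Finset.sum_pos' (fun l _ => mul_nonneg (mul_nonneg (hA i l) (hw l)) (hcol l))
    ⟨j, Finset.mem_univ j, mul_pos (mul_pos hij hwj) hcolj⟩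

end MulDiagonalTranspose

variable {n : ℕ} (P : Matrix (Fin n) (Fin n) ℝ) (β b d γ : Fin n → ℝ) (I : Fin n → ℝ)

lemma Mmat_eq : Mmat P β b d = P * diagonal (fun j => β j * (Ntil P b d j)⁻¹) * Pᵀ := by
  rw [Mmat, Matrix.mul_assoc P, diagonal_mul_diagonal]

lemma Fmat_add_Vmat_mulVec :
    (Fmat P β b d + Vmat d γ) *ᵥ I =
      fun i => Nbar b d i * (Mmat P β b d *ᵥ I) i - (d i + γ i) * I i := by
  ext i
  simp only [Fmat, Vmat, add_mulVec, ← mulVec_mulVec, neg_mulVec, Pi.add_apply, Pi.neg_apply,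
    mulVec_diagonal]
  ring

lemma Gfield_eq_sub :
    Gfield P β b d γ I =
      (Fmat P β b d + Vmat d γ) *ᵥ I - fun i => I i * (Mmat P β b d *ᵥ I) i := by
  ext i
  simp only [Gfield, Fmat_add_Vmat_mulVec, Pi.sub_apply]
  ring

lemma DXmat_mulVec :
    DXmat P β b d γ I *ᵥ I = Gfield P β b d γ I - fun i => (Mmat P β b d *ᵥ I) i * I i := by
  ext i
  simp only [DXmat, Vmat, sub_mulVec, add_mulVec, ← mulVec_mulVec, neg_mulVec, mulVec_diagonal,
    Gfield, Pi.sub_apply, Pi.add_apply, Pi.neg_apply]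
  ring

variable {P β b d I}

lemma Ntil_pos (hb : ∀ i, 0 < b i) (hd : ∀ i, 0 < d i) (hP0 : ∀ i j, 0 ≤ P i j)
    {i j : Fin n} (hij : 0 < P i j) : 0 < Ntil P b d j :=
  Finset.sum_pos' (fun k _ => mul_nonneg (hP0 k j) (div_pos (hb k) (hd k)).le)
    ⟨i, Finset.mem_univ i, mul_pos hij (div_pos (hb i) (hd i))⟩

lemma Mmat_mulVec_pos (hb : ∀ i, 0 < b i) (hd : ∀ i, 0 < d i) (hβ : ∀ j, 0 < β j)
    (hP0 : ∀ i j, 0 ≤ P i j) (hrow : ∀ i, ∑ j, P i j = 1) (hI : ∀ i, 0 < I i) (i : Fin n) :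
    0 < (Mmat P β b d *ᵥ I) i := by
  obtain ⟨j, -, hij⟩ : ∃ j ∈ Finset.univ, (0 : ℝ) < P i j :=
    Finset.exists_lt_of_sum_lt (by simp [hrow i])
  have hw : ∀ j, 0 ≤ β j * (Ntil P b d j)⁻¹ := fun j =>
    mul_nonneg (hβ j).le (inv_nonneg.2 (Finset.sum_nonneg fun k _ =>
      mul_nonneg (hP0 k j) (div_pos (hb k) (hd k)).le))
  rw [Mmat_eq]
  exact mul_diagonal_mul_transpose_mulVec_pos hP0 hw hI hij
    (mul_pos (hβ j) (inv_pos.2 (Ntil_pos hb hd hP0 hij)))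

theorem sis_jacobian_at_endemic_equilibrium_general
    {n : ℕ} (b d γ β : Fin n → ℝ) (P : Matrix (Fin n) (Fin n) ℝ)
    (hb : ∀ i, 0 < b i) (hd : ∀ i, 0 < d i) (hβ : ∀ j, 0 < β j)
    (hP0 : ∀ i j, 0 ≤ P i j)
    (hrow : ∀ i, ∑ j, P i j = 1)
    (Ibar : Fin n → ℝ) (hpos : ∀ i, 0 < Ibar i)
    (heq : (Fmat P β b d + Vmat d γ).mulVec Ibar =
      fun i => Ibar i * (Mmat P β b d).mulVec Ibar i) :
    ((DXmat P β b d γ Ibar).mulVec Ibar =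
      fun i => -((Mmat P β b d).mulVec Ibar i * Ibar i)) ∧
    ∀ i, (DXmat P β b d γ Ibar).mulVec Ibar i < 0 := by
  have hG : Gfield P β b d γ Ibar = 0 := by rw [Gfield_eq_sub, heq, sub_self]
  have hDX : (DXmat P β b d γ Ibar).mulVec Ibar =
      fun i => -((Mmat P β b d).mulVec Ibar i * Ibar i) := by
    rw [DXmat_mulVec, hG, zero_sub]
    rfl
  refine ⟨hDX, fun i => ?_⟩
  rw [hDX]
  exact neg_neg_of_pos (mul_pos (Mmat_mulVec_pos hb hd hβ hP0 hrow hpos i) (hpos i))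

/-- at a positive equilibrium Ī with (F + V)·Ī = diag(Ī)·M·Ī, the
Jacobian satisfies DX(Ī)·Ī = −diag(M·Ī)·Ī, whose components −(M·Ī)ᵢ·Īᵢ are all
strictly negative. -/
theorem sis_jacobian_at_endemic_equilibrium
    {n : ℕ} (hn : 1 ≤ n) (b d γ β : Fin n → ℝ) (P : Matrix (Fin n) (Fin n) ℝ)
    (hb : ∀ i, 0 < b i) (hd : ∀ i, 0 < d i) (hγ : ∀ i, 0 ≤ γ i) (hβ : ∀ j, 0 < β j)
    (hP0 : ∀ i j, 0 ≤ P i j) (hP1 : ∀ i j, P i j ≤ 1)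
    (hrow : ∀ i, ∑ j, P i j = 1) (hcol : ∀ j, ∃ k, 0 < P k j)
    (Ibar : Fin n → ℝ) (hpos : ∀ i, 0 < Ibar i)
    (heq : (Fmat P β b d + Vmat d γ).mulVec Ibar =
      fun i => Ibar i * (Mmat P β b d).mulVec Ibar i) :
    ((DXmat P β b d γ Ibar).mulVec Ibar =
      fun i => -((Mmat P β b d).mulVec Ibar i * Ibar i)) ∧
    ∀ i, (DXmat P β b d γ Ibar).mulVec Ibar i < 0 :=
  sis_jacobian_at_endemic_equilibrium_general b d γ β P hb hd hβ hP0 hrow Ibar hpos heq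
end
end

section
/- Fix a patch i and suppose Condition H holds for patch i. Then the hyperplane {I_i = 0} is invariant for the SIS vector field: for every I ∈ ℝ^n with I_k ≥ 0 for all k and I_i = 0, the i-th component of the vector field vanishes, G(I)_i = 0. -/
open Matrix Filter

noncomputable section

/-- under Condition H for patch i, the hyperplane {Iᵢ = 0} is
invariant: G(I)ᵢ = 0 whenever I ≥ 0 and Iᵢ = 0. -/
theorem sis_invariant_hyperplane
    {n : ℕ} (hn : 1 ≤ n) (b d γ β : Fin n → ℝ) (P : Matrix (Fin n) (Fin n) ℝ)
    (hb : ∀ i, 0 < b i) (hd : ∀ i, 0 < d i) (hγ : ∀ i, 0 ≤ γ i) (hβ : ∀ j, 0 < β j)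
    (hP0 : ∀ i j, 0 ≤ P i j) (hP1 : ∀ i j, P i j ≤ 1)
    (hrow : ∀ i, ∑ j, P i j = 1) (hcol : ∀ j, ∃ k, 0 < P k j)
    (i : Fin n) (hH : CondH P i) :
    ∀ I : Fin n → ℝ, (∀ k, 0 ≤ I k) → I i = 0 → Gfield P β b d γ I i = 0 := by
  intro I hInn hIi
  have hM : (Mmat P β b d).mulVec I i = 0 := by
    simp only [Mmat, Matrix.mulVec, dotProduct, Matrix.mul_apply,
      Matrix.diagonal_apply, Matrix.transpose_apply]
    apply Finset.sum_eq_zero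
    intro k _
    rcases eq_or_ne k i with rfl | hk
    · simp [hIi]
    · rw [mul_eq_zero]; left
      apply Finset.sum_eq_zero
      intro j _
      rcases eq_or_lt_of_le (hP0 i j) with h | h
      · simp [Finset.sum_ite_eq', mul_ite, ← h]
      · simp [Finset.sum_ite_eq', mul_ite, hH j h k hk]
  simp [Gfield, hM, hIi]
end
end

section
/- Final size relation for the two-patch SIR single-outbreak model: let (S_i, I_i, R_i), i ∈ {1,2}, be a global nonnegative solution with S_i(t) > 0 for all t ≥ 0, R_i(0) = 0, and such that the limits S_i(∞) = lim_{t→∞} S_i(t) exist and are strictly positive and I_i(t) → 0 as t → ∞. Then for i ∈ {1,2}: log(S_i(0)/S_i(∞)) = K_{i1}(1 − S_1(∞)/N_1) + K_{i2}(1 − S_2(∞)/N_2), where K_{i1} = (coefficient of I_1 in Ṡ_i/S_i)·N_1/α_1 and K_{i2} = (coefficient of I_2 in Ṡ_i/S_i)·N_2/α_2; explicitly K_{11} = a_1 N_1/α_1, K_{12} = c N_2/α_2, K_{21} = c N_1/α_1, K_{22} = a_2 N_2/α_2. -/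
open Matrix Filter

noncomputable section

/-- D₁ = p₁₁N₁ + p₂₁N₂, the effective population of patch 1. -/
def sirD1 (q11 q21 N1 N2 : ℝ) : ℝ := q11 * N1 + q21 * N2

/-- D₂ = p₁₂N₁ + p₂₂N₂, the effective population of patch 2. -/
def sirD2 (q12 q22 N1 N2 : ℝ) : ℝ := q12 * N1 + q22 * N2

/-- a₁ = β₁p₁₁²/D₁ + β₂p₁₂²/D₂. -/
def sirA1 (β1 β2 q11 q12 q21 q22 N1 N2 : ℝ) : ℝ :=
  β1 * q11 ^ 2 / sirD1 q11 q21 N1 N2 + β2 * q12 ^ 2 / sirD2 q12 q22 N1 N2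

/-- a₂ = β₁p₂₁²/D₁ + β₂p₂₂²/D₂. -/
def sirA2 (β1 β2 q11 q12 q21 q22 N1 N2 : ℝ) : ℝ :=
  β1 * q21 ^ 2 / sirD1 q11 q21 N1 N2 + β2 * q22 ^ 2 / sirD2 q12 q22 N1 N2

/-- c = β₁p₁₁p₂₁/D₁ + β₂p₁₂p₂₂/D₂. -/
def sirC (β1 β2 q11 q12 q21 q22 N1 N2 : ℝ) : ℝ :=
  β1 * q11 * q21 / sirD1 q11 q21 N1 N2 + β2 * q12 * q22 / sirD2 q12 q22 N1 N2

/-- `(S₁,I₁,R₁,S₂,I₂,R₂)` is a solution of the two-patch SIR single-outbreak model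
İᵢ = aᵢSᵢIᵢ + cSᵢIⱼ − αᵢIᵢ, Ṡᵢ = −aᵢSᵢIᵢ − cSᵢIⱼ, Ṙᵢ = αᵢIᵢ on [0,∞). -/
def SIRSol (a1 a2 c α1 α2 : ℝ) (S1 I1 R1 S2 I2 R2 : ℝ → ℝ) : Prop :=
  ∀ t ∈ Set.Ici (0 : ℝ),
    HasDerivWithinAt S1 (-(a1 * S1 t * I1 t) - c * S1 t * I2 t) (Set.Ici 0) t ∧
    HasDerivWithinAt I1 (a1 * S1 t * I1 t + c * S1 t * I2 t - α1 * I1 t) (Set.Ici 0) t ∧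
    HasDerivWithinAt R1 (α1 * I1 t) (Set.Ici 0) t ∧
    HasDerivWithinAt S2 (-(c * S2 t * I1 t) - a2 * S2 t * I2 t) (Set.Ici 0) t ∧
    HasDerivWithinAt I2 (c * S2 t * I1 t + a2 * S2 t * I2 t - α2 * I2 t) (Set.Ici 0) t ∧
    HasDerivWithinAt R2 (α2 * I2 t) (Set.Ici 0) t

/-- Nonnegativity of all components of a solution, and conservation Sᵢ+Iᵢ+Rᵢ = Nᵢ. -/
def SIRNonnegConserved (N1 N2 : ℝ) (S1 I1 R1 S2 I2 R2 : ℝ → ℝ) : Prop :=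
  ∀ t ∈ Set.Ici (0 : ℝ),
    (0 ≤ S1 t ∧ 0 ≤ I1 t ∧ 0 ≤ R1 t ∧ 0 ≤ S2 t ∧ 0 ≤ I2 t ∧ 0 ≤ R2 t) ∧
    S1 t + I1 t + R1 t = N1 ∧ S2 t + I2 t + R2 t = N2

/-!
Along a solution, `(log Sᵢ)' = -(k_{i1} I₁ + k_{i2} I₂)` while `Rⱼ' = αⱼ Iⱼ`, so
`log Sᵢ + (k_{i1}/α₁) R₁ + (k_{i2}/α₂) R₂` is a first integral. Comparing its values at `t = 0`
(where `Rⱼ = 0`) and `t = ∞` (where `Rⱼ = Nⱼ - Sⱼ(∞)`, since `Iⱼ → 0`) gives the relation.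
-/

open Set Topology

theorem eq_of_hasDerivWithinAt_zero_of_tendsto {F : ℝ → ℝ} {a L : ℝ}
    (hF : ∀ t ∈ Ici a, HasDerivWithinAt F 0 (Ici a) t) (hlim : Tendsto F atTop (𝓝 L)) :
    F a = L := by
  have hconst : ∀ t ∈ Ici a, F t = F a := fun t ht =>
    constant_of_has_deriv_right_zero
      (fun x hx => (hF x hx.1).continuousWithinAt.mono Icc_subset_Ici_self)
      (fun x hx => (hF x hx.1).mono (Ici_subset_Ici.2 hx.1)) t ⟨ht, le_rfl⟩
  refine tendsto_nhds_unique (tendsto_const_nhds.congr' ?_) hlim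
  filter_upwards [eventually_ge_atTop a] with t ht using (hconst t ht).symm

theorem tendsto_sub_of_add_add_eq {S I R : ℝ → ℝ} {N s : ℝ}
    (hcons : ∀ᶠ t in atTop, S t + I t + R t = N)
    (hS : Tendsto S atTop (𝓝 s)) (hI : Tendsto I atTop (𝓝 0)) :
    Tendsto R atTop (𝓝 (N - s)) := by
  have hR : Tendsto (fun t => N - S t - I t) atTop (𝓝 (N - s - 0)) :=
    (tendsto_const_nhds.sub hS).sub hI
  rw [sub_zero] at hR
  refine hR.congr' ?_
  filter_upwards [hcons] with t ht
  linarith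

theorem sir_patch_final_size {k1 k2 α1 α2 Sinf L1 L2 : ℝ} {S I1 I2 R1 R2 : ℝ → ℝ}
    (hα1 : α1 ≠ 0) (hα2 : α2 ≠ 0)
    (hS : ∀ t ∈ Ici (0 : ℝ),
      HasDerivWithinAt S (-(k1 * S t * I1 t) - k2 * S t * I2 t) (Ici 0) t)
    (hR1 : ∀ t ∈ Ici (0 : ℝ), HasDerivWithinAt R1 (α1 * I1 t) (Ici 0) t)
    (hR2 : ∀ t ∈ Ici (0 : ℝ), HasDerivWithinAt R2 (α2 * I2 t) (Ici 0) t)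
    (hSpos : ∀ t ∈ Ici (0 : ℝ), 0 < S t) (hR10 : R1 0 = 0) (hR20 : R2 0 = 0)
    (hSinf : 0 < Sinf) (hlimS : Tendsto S atTop (𝓝 Sinf))
    (hlimR1 : Tendsto R1 atTop (𝓝 L1)) (hlimR2 : Tendsto R2 atTop (𝓝 L2)) :
    Real.log (S 0 / Sinf) = k1 / α1 * L1 + k2 / α2 * L2 := by
  set F : ℝ → ℝ := fun t => Real.log (S t) + k1 / α1 * R1 t + k2 / α2 * R2 t
  have hF' : ∀ t ∈ Ici (0 : ℝ), HasDerivWithinAt F 0 (Ici 0) t := by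
    intro t ht
    have hSt : S t ≠ 0 := (hSpos t ht).ne'
    have hsum := (((hS t ht).log hSt).add ((hR1 t ht).const_mul (k1 / α1))).add
      ((hR2 t ht).const_mul (k2 / α2))
    rwa [show (-(k1 * S t * I1 t) - k2 * S t * I2 t) / S t + k1 / α1 * (α1 * I1 t)
      + k2 / α2 * (α2 * I2 t) = 0 by field_simp; ring] at hsum
  have hF0 : F 0 = Real.log Sinf + k1 / α1 * L1 + k2 / α2 * L2 :=
    eq_of_hasDerivWithinAt_zero_of_tendsto hF'
      (((hlimS.log hSinf.ne').add (hlimR1.const_mul _)).add (hlimR2.const_mul _))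
  simp only [F, hR10, hR20, mul_zero, add_zero] at hF0
  rw [Real.log_div (hSpos 0 self_mem_Ici).ne' hSinf.ne', hF0]
  ring

theorem sir_final_size_relation_general
    (β1 β2 α1 α2 q11 q12 q21 q22 N1 N2 : ℝ)
    (hα1 : 0 < α1) (hα2 : 0 < α2)
    (hN1 : 0 < N1) (hN2 : 0 < N2)
    (S1 I1 R1 S2 I2 R2 : ℝ → ℝ)
    (hsol : SIRSol (sirA1 β1 β2 q11 q12 q21 q22 N1 N2)
      (sirA2 β1 β2 q11 q12 q21 q22 N1 N2) (sirC β1 β2 q11 q12 q21 q22 N1 N2)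
      α1 α2 S1 I1 R1 S2 I2 R2)
    (hnc : SIRNonnegConserved N1 N2 S1 I1 R1 S2 I2 R2)
    (hSpos : ∀ t ∈ Set.Ici (0 : ℝ), 0 < S1 t ∧ 0 < S2 t)
    (hR0' : R1 0 = 0 ∧ R2 0 = 0)
    (S1inf S2inf : ℝ) (hS1inf : 0 < S1inf) (hS2inf : 0 < S2inf)
    (hlim1 : Tendsto S1 atTop (nhds S1inf)) (hlim2 : Tendsto S2 atTop (nhds S2inf))
    (hIlim1 : Tendsto I1 atTop (nhds 0)) (hIlim2 : Tendsto I2 atTop (nhds 0)) :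
    Real.log (S1 0 / S1inf) =
      (sirA1 β1 β2 q11 q12 q21 q22 N1 N2 * N1 / α1) * (1 - S1inf / N1) +
      (sirC β1 β2 q11 q12 q21 q22 N1 N2 * N2 / α2) * (1 - S2inf / N2) ∧
    Real.log (S2 0 / S2inf) =
      (sirC β1 β2 q11 q12 q21 q22 N1 N2 * N1 / α1) * (1 - S1inf / N1) +
      (sirA2 β1 β2 q11 q12 q21 q22 N1 N2 * N2 / α2) * (1 - S2inf / N2) := by
  have hcons : ∀ᶠ t in atTop, S1 t + I1 t + R1 t = N1 ∧ S2 t + I2 t + R2 t = N2 := by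
    filter_upwards [eventually_ge_atTop 0] with t ht using (hnc t ht).2
  have hRlim1 := tendsto_sub_of_add_add_eq (hcons.mono fun _ h => h.1) hlim1 hIlim1
  have hRlim2 := tendsto_sub_of_add_add_eq (hcons.mono fun _ h => h.2) hlim2 hIlim2
  have hR1 := fun t ht => (hsol t ht).2.2.1
  have hR2 := fun t ht => (hsol t ht).2.2.2.2.2
  constructor
  · rw [sir_patch_final_size hα1.ne' hα2.ne' (fun t ht => (hsol t ht).1) hR1 hR2
      (fun t ht => (hSpos t ht).1) hR0'.1 hR0'.2 hS1inf hlim1 hRlim1 hRlim2]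
    field_simp
  · rw [sir_patch_final_size hα1.ne' hα2.ne' (fun t ht => (hsol t ht).2.2.2.1) hR1 hR2
      (fun t ht => (hSpos t ht).2) hR0'.1 hR0'.2 hS2inf hlim2 hRlim1 hRlim2]
    field_simp

/-- final size relation for the two-patch SIR single-outbreak model:
log(Sᵢ(0)/Sᵢ(∞)) = K_{i1}(1 − S₁(∞)/N₁) + K_{i2}(1 − S₂(∞)/N₂) with
K₁₁ = a₁N₁/α₁, K₁₂ = cN₂/α₂, K₂₁ = cN₁/α₁, K₂₂ = a₂N₂/α₂. -/
theorem sir_final_size_relation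
    (β1 β2 α1 α2 q11 q12 q21 q22 N1 N2 : ℝ)
    (hβ1 : 0 < β1) (hβ2 : 0 < β2) (hα1 : 0 < α1) (hα2 : 0 < α2)
    (hq11 : 0 ≤ q11 ∧ q11 ≤ 1) (hq12 : 0 ≤ q12 ∧ q12 ≤ 1)
    (hq21 : 0 ≤ q21 ∧ q21 ≤ 1) (hq22 : 0 ≤ q22 ∧ q22 ≤ 1)
    (hrow1 : q11 + q12 = 1) (hrow2 : q21 + q22 = 1)
    (hN1 : 0 < N1) (hN2 : 0 < N2)
    (hD1 : 0 < sirD1 q11 q21 N1 N2) (hD2 : 0 < sirD2 q12 q22 N1 N2)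
    (S1 I1 R1 S2 I2 R2 : ℝ → ℝ)
    (hsol : SIRSol (sirA1 β1 β2 q11 q12 q21 q22 N1 N2)
      (sirA2 β1 β2 q11 q12 q21 q22 N1 N2) (sirC β1 β2 q11 q12 q21 q22 N1 N2)
      α1 α2 S1 I1 R1 S2 I2 R2)
    (hnc : SIRNonnegConserved N1 N2 S1 I1 R1 S2 I2 R2)
    (hSpos : ∀ t ∈ Set.Ici (0 : ℝ), 0 < S1 t ∧ 0 < S2 t)
    (hR0' : R1 0 = 0 ∧ R2 0 = 0)
    (S1inf S2inf : ℝ) (hS1inf : 0 < S1inf) (hS2inf : 0 < S2inf)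
    (hlim1 : Tendsto S1 atTop (nhds S1inf)) (hlim2 : Tendsto S2 atTop (nhds S2inf))
    (hIlim1 : Tendsto I1 atTop (nhds 0)) (hIlim2 : Tendsto I2 atTop (nhds 0)) :
    Real.log (S1 0 / S1inf) =
      (sirA1 β1 β2 q11 q12 q21 q22 N1 N2 * N1 / α1) * (1 - S1inf / N1) +
      (sirC β1 β2 q11 q12 q21 q22 N1 N2 * N2 / α2) * (1 - S2inf / N2) ∧
    Real.log (S2 0 / S2inf) =
      (sirC β1 β2 q11 q12 q21 q22 N1 N2 * N1 / α1) * (1 - S1inf / N1) +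
      (sirA2 β1 β2 q11 q12 q21 q22 N1 N2 * N2 / α2) * (1 - S2inf / N2) :=
  sir_final_size_relation_general β1 β2 α1 α2 q11 q12 q21 q22 N1 N2 hα1 hα2 hN1 hN2 S1 I1 R1 S2 I2
    R2 hsol hnc hSpos hR0' S1inf S2inf hS1inf hS2inf hlim1 hlim2 hIlim1 hIlim2
end
end
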